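/- Up to IPC-provable equivalence, every NNIL formula is a finite disjunction of IPC-prime NNIL formulas; i.e. NNIL = (prime NNIL)^∨ modulo IPC-equivalence. -/

import Mathlib

inductive Fm : Type
  | bot : Fm
  | atom : ℕ → Fm
  | and : Fm → Fm → Fm
  | or : Fm → Fm → Fm
  | imp : Fm → Fm → Fm
deriving DecidableEq

namespace Fm

def neg (A : Fm) : Fm := A.imp .bot
def top : Fm := Fm.bot.imp .bot
def iff (A B : Fm) : Fm := (A.imp B).and (B.imp A)

def subst (θ : ℕ → Fm) : Fm → Fm
  | bot => bot
  | atom n => θ n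
  | and A B => (A.subst θ).and (B.subst θ)
  | or A B => (A.subst θ).or (B.subst θ)
  | imp A B => (A.subst θ).imp (B.subst θ)

def atoms : Fm → Finset ℕ
  | bot => ∅
  | atom n => {n}
  | and A B => A.atoms ∪ B.atoms
  | or A B => A.atoms ∪ B.atoms
  | imp A B => A.atoms ∪ B.atoms

/-- maximal nesting of implications in the left/overall: `c→`. -/
def cimp : Fm → ℕ
  | bot => 0
  | atom _ => 0
  | and A B => max A.cimp B.cimp
  | or A B => max A.cimp B.cimp
  | imp A B => 1 + max A.cimp B.cimp

end Fm

def bigAndL (l : List Fm) : Fm := l.foldr Fm.and Fm.top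
def bigOrL (l : List Fm) : Fm := l.foldr Fm.or Fm.bot

/-- nonempty disjunction -/
def bigOrNE : Fm → List Fm → Fm
  | A, [] => A
  | A, B :: l => A.or (bigOrNE B l)

/-- Hilbert-style intuitionistic propositional calculus. -/
inductive IPC : Fm → Prop
  | imp_k (A B : Fm) : IPC (A.imp (B.imp A))
  | imp_s (A B C : Fm) : IPC ((A.imp (B.imp C)).imp ((A.imp B).imp (A.imp C)))
  | and_intro (A B : Fm) : IPC (A.imp (B.imp (A.and B)))
  | and_left (A B : Fm) : IPC ((A.and B).imp A)
  | and_right (A B : Fm) : IPC ((A.and B).imp B)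
  | or_inl (A B : Fm) : IPC (A.imp (A.or B))
  | or_inr (A B : Fm) : IPC (B.imp (A.or B))
  | or_elim (A B C : Fm) : IPC ((A.imp C).imp ((B.imp C).imp ((A.or B).imp C)))
  | exfalso (A : Fm) : IPC (Fm.bot.imp A)
  | mp {A B : Fm} : IPC (A.imp B) → IPC A → IPC B

/-- Γ-preservativity in the logic T : `A ⊳_{T,Γ} B`. -/
def Pres (T : Fm → Prop) (Γ : Set Fm) (A B : Fm) : Prop :=
  ∀ E ∈ Γ, T (E.imp A) → T (E.imp B)

/-- substitutions are identity on the parameters. -/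
def IdOnPar (par : Finset ℕ) (θ : ℕ → Fm) : Prop :=
  ∀ p ∈ par, θ p = Fm.atom p

/-- implication-free formulas. -/
inductive NI : Fm → Prop
  | bot : NI .bot
  | atom (n : ℕ) : NI (.atom n)
  | and {A B : Fm} : NI A → NI B → NI (A.and B)
  | or {A B : Fm} : NI A → NI B → NI (A.or B)

/-- No Nested Implications in the Left. -/
inductive NNIL : Fm → Prop
  | bot : NNIL .bot
  | atom (n : ℕ) : NNIL (.atom n)
  | and {A B : Fm} : NNIL A → NNIL B → NNIL (A.and B)
  | or {A B : Fm} : NNIL A → NNIL B → NNIL (A.or B)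
  | imp {A B : Fm} : NI A → NNIL B → NNIL (A.imp B)

def IPCPrime (A : Fm) : Prop :=
  ∀ B C, IPC (A.imp (B.or C)) → IPC (A.imp B) ∨ IPC (A.imp C)

/-- T-components: `⋀Γ ∧ ⋀Δ`, Γ atoms, Δ implications with atomic
antecedents not T-provable from Γ. -/
def IsComponentOver (T : Fm → Prop) (B : Fm) : Prop :=
  ∃ (as : List ℕ) (imps : List (ℕ × Fm)),
    B = (bigAndL (as.map Fm.atom)).and
          (bigAndL (imps.map fun p => (Fm.atom p.1).imp p.2)) ∧
    ∀ p ∈ imps, ¬ T ((bigAndL (as.map Fm.atom)).imp (Fm.atom p.1))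


/-! A NNIL formula is decomposed by conjoining it, one pending formula at a time, to a *component*
`⋀ as ∧ ⋀ (pᵢ → Eᵢ)` whose implications are frozen (`pᵢ ∉ as`): conjunctions are split,
disjunctions branch, an implication with a compound NI antecedent is curried or split into
implications with smaller antecedents, one with an atomic antecedent is fired if that atom is
present and frozen otherwise, and a new atom thaws the implications waiting for it. Each step
preserves IPC-equivalence and lowers a weight, so the process ends in a disjunction of components.

A component `D` is prime because it slashes itself in Aczel's sense: its atoms are provable from
`D`, and its implications hold vacuously, since the valuation making exactly `as` true satisfies
`D` but refutes every `pᵢ`. As IPC is closed under the slash, `D → B ∨ C` then gives `D → B` or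
`D → C`. -/

namespace IPC

theorem imp_self (A : Fm) : IPC (A.imp A) :=
  mp (mp (imp_s A (A.imp A) A) (imp_k A (A.imp A))) (imp_k A A)

theorem weaken {X : Fm} (D : Fm) (h : IPC X) : IPC (D.imp X) :=
  mp (imp_k X D) h

theorem mp_imp {D A B : Fm} (h₁ : IPC (D.imp (A.imp B))) (h₂ : IPC (D.imp A)) :
    IPC (D.imp B) :=
  mp (mp (imp_s D A B) h₁) h₂

end IPC

inductive Der : List Fm → Fm → Prop
  | hyp {Γ : List Fm} {A : Fm} : A ∈ Γ → Der Γ A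
  | ax {Γ : List Fm} {A : Fm} : IPC A → Der Γ A
  | mp {Γ : List Fm} {A B : Fm} : Der Γ (A.imp B) → Der Γ A → Der Γ B

namespace Der

variable {Γ Δ : List Fm} {A B C : Fm}

theorem head : Der (A :: Γ) A := hyp List.mem_cons_self

theorem cut (h : Der Γ A) (hΓ : ∀ X ∈ Γ, Der Δ X) : Der Δ A := by
  induction h with
  | hyp hA => exact hΓ _ hA
  | ax hA => exact ax hA
  | mp _ _ ih₁ ih₂ => exact mp ih₁ ih₂

theorem weaken (h : Der Γ A) (hΓ : Γ ⊆ Δ) : Der Δ A := h.cut fun _ hX => hyp (hΓ hX)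

theorem trans (hA : Der Γ A) (h : Der [A] B) : Der Γ B := h.cut (by simpa using hA)

theorem imp_intro (h : Der (A :: Γ) B) : Der Γ (A.imp B) := by
  generalize hΔ : A :: Γ = Δ at h
  induction h with
  | hyp hB =>
    subst hΔ
    rcases List.mem_cons.1 hB with rfl | hB
    · exact ax (IPC.imp_self _)
    · exact mp (ax (IPC.imp_k _ _)) (hyp hB)
  | ax hB => exact mp (ax (IPC.imp_k _ _)) (ax hB)
  | mp _ _ ih₁ ih₂ => exact mp (mp (ax (IPC.imp_s _ _ _)) ih₁) ih₂

theorem toIPC (h : Der [] A) : IPC A := by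
  generalize hΓ : ([] : List Fm) = Γ at h
  induction h with
  | hyp hA => simp [← hΓ] at hA
  | ax hA => exact hA
  | mp _ _ ih₁ ih₂ => exact IPC.mp ih₁ ih₂

theorem and_intro (h₁ : Der Γ A) (h₂ : Der Γ B) : Der Γ (A.and B) :=
  mp (mp (ax (IPC.and_intro A B)) h₁) h₂

theorem and_left (h : Der Γ (A.and B)) : Der Γ A := mp (ax (IPC.and_left A B)) h

theorem and_right (h : Der Γ (A.and B)) : Der Γ B := mp (ax (IPC.and_right A B)) h

theorem or_inl (h : Der Γ A) : Der Γ (A.or B) := mp (ax (IPC.or_inl A B)) h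

theorem or_inr (h : Der Γ B) : Der Γ (A.or B) := mp (ax (IPC.or_inr A B)) h

theorem or_elim (h : Der Γ (A.or B)) (h₁ : Der (A :: Γ) C) (h₂ : Der (B :: Γ) C) : Der Γ C :=
  mp (mp (mp (ax (IPC.or_elim A B C)) h₁.imp_intro) h₂.imp_intro) h

theorem exfalso (h : Der Γ .bot) : Der Γ A := mp (ax (IPC.exfalso A)) h

theorem bigAndL_iff {l : List Fm} : Der Γ (bigAndL l) ↔ ∀ X ∈ l, Der Γ X := by
  induction l with
  | nil => simpa [bigAndL, Fm.top] using ax (IPC.imp_self .bot)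
  | cons X l ih =>
    simp only [bigAndL, List.foldr_cons, List.forall_mem_cons] at ih ⊢
    exact ⟨fun h => ⟨h.and_left, ih.1 h.and_right⟩, fun h => and_intro h.1 (ih.2 h.2)⟩

theorem bigOrNE_intro {X : Fm} {l : List Fm} (hX : X ∈ B :: l) (h : Der Γ X) :
    Der Γ (bigOrNE B l) := by
  induction l generalizing B with
  | nil => exact List.mem_singleton.1 hX ▸ h
  | cons B' l ih =>
    rcases List.mem_cons.1 hX with rfl | hX
    · exact or_inl h
    · exact or_inr (ih hX)

theorem bigOrNE_elim {l : List Fm} (h : Der Γ (bigOrNE B l))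
    (hC : ∀ X ∈ B :: l, Der (X :: Γ) C) : Der Γ C := by
  induction l generalizing B Γ with
  | nil => exact mp (hC B List.mem_cons_self).imp_intro h
  | cons B' l ih =>
    refine or_elim h (hC B List.mem_cons_self) (ih head fun X hX => ?_)
    exact (hC X (List.mem_cons_of_mem _ hX)).weaken
      (List.cons_subset_cons _ (List.subset_cons_self _ _))

theorem bigOrNE_mono {l m : List Fm} (h : Der Γ (bigOrNE A l)) (hlm : A :: l ⊆ B :: m) :
    Der Γ (bigOrNE B m) :=
  h.bigOrNE_elim fun _ hX => bigOrNE_intro (hlm hX) head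

end Der

theorem IPC.iff_intro {A B : Fm} (h₁ : Der [A] B) (h₂ : Der [B] A) : IPC (A.iff B) :=
  IPC.mp (IPC.mp (IPC.and_intro _ _) h₁.imp_intro.toIPC) h₂.imp_intro.toIPC

theorem IPC.der_of_iff {A B : Fm} (h : IPC (A.iff B)) : Der [A] B ∧ Der [B] A :=
  ⟨Der.mp (Der.ax (IPC.mp (IPC.and_left _ _) h)) Der.head,
    Der.mp (Der.ax (IPC.mp (IPC.and_right _ _) h)) Der.head⟩

theorem IPC.iff_trans {A B C : Fm} (h₁ : IPC (A.iff B)) (h₂ : IPC (B.iff C)) :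
    IPC (A.iff C) :=
  IPC.iff_intro (h₁.der_of_iff.1.trans h₂.der_of_iff.1) (h₂.der_of_iff.2.trans h₁.der_of_iff.2)

theorem ipc_iff_bigAndL {Γ Δ : List Fm} (h₁ : ∀ X ∈ Δ, Der Γ X) (h₂ : ∀ X ∈ Γ, Der Δ X) :
    IPC ((bigAndL Γ).iff (bigAndL Δ)) :=
  IPC.iff_intro
    (Der.bigAndL_iff.2 fun X hX => (h₁ X hX).cut (Der.bigAndL_iff.1 Der.head))
    (Der.bigAndL_iff.2 fun X hX => (h₂ X hX).cut (Der.bigAndL_iff.1 Der.head))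

theorem ipc_iff_bigAndL_cons {A : Fm} {Δ Γ : List Fm} (h₁ : ∀ X ∈ Δ, Der (A :: Γ) X)
    (h₂ : Der (Δ ++ Γ) A) : IPC ((bigAndL (A :: Γ)).iff (bigAndL (Δ ++ Γ))) := by
  refine ipc_iff_bigAndL (fun X hX => ?_) (fun X hX => ?_)
  · rcases List.mem_append.1 hX with hX | hX
    · exact h₁ X hX
    · exact Der.hyp (List.mem_cons_of_mem _ hX)
  · rcases List.mem_cons.1 hX with rfl | hX
    · exact h₂
    · exact Der.hyp (List.mem_append_right _ hX)

def PrimeDecomposable (A : Fm) : Prop :=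
  ∃ (B : Fm) (l : List Fm), (∀ C ∈ B :: l, NNIL C ∧ IPCPrime C) ∧ IPC (A.iff (bigOrNE B l))

theorem PrimeDecomposable.of_iff {A B : Fm} (hB : PrimeDecomposable B) (h : IPC (A.iff B)) :
    PrimeDecomposable A :=
  let ⟨B₀, l, hl, hB⟩ := hB
  ⟨B₀, l, hl, h.iff_trans hB⟩

theorem PrimeDecomposable.or {A B : Fm} (hA : PrimeDecomposable A)
    (hB : PrimeDecomposable B) : PrimeDecomposable (A.or B) := by
  obtain ⟨A₀, l, hl, hAl⟩ := hA
  obtain ⟨B₀, m, hm, hBm⟩ := hB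
  have hlm : ∀ X, X ∈ A₀ :: (l ++ B₀ :: m) ↔ X ∈ A₀ :: l ∨ X ∈ B₀ :: m := by simp [or_assoc]
  refine ⟨A₀, l ++ B₀ :: m, fun C hC => ((hlm C).1 hC).elim (hl C) (hm C), ?_⟩
  refine IPC.iff_intro ?_ (Der.bigOrNE_elim Der.head fun X hX => ?_)
  · refine Der.or_elim Der.head ?_ ?_
    · exact (Der.head.trans hAl.der_of_iff.1).bigOrNE_mono fun X hX => (hlm X).2 (.inl hX)
    · exact (Der.head.trans hBm.der_of_iff.1).bigOrNE_mono fun X hX => (hlm X).2 (.inr hX)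
  · rcases (hlm X).1 hX with hX | hX
    · exact Der.or_inl ((Der.bigOrNE_intro hX Der.head).trans hAl.der_of_iff.2)
    · exact Der.or_inr ((Der.bigOrNE_intro hX Der.head).trans hBm.der_of_iff.2)

theorem ipcPrime_bot : IPCPrime .bot := fun B _ _ => .inl (IPC.exfalso B)

theorem primeDecomposable_bot : PrimeDecomposable .bot :=
  ⟨.bot, [], by simpa using ⟨NNIL.bot, ipcPrime_bot⟩,
    IPC.iff_intro Der.head (by simpa [bigOrNE] using Der.head)⟩

def evalB (v : ℕ → Bool) : Fm → Bool
  | .bot => false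
  | .atom n => v n
  | .and A B => evalB v A && evalB v B
  | .or A B => evalB v A || evalB v B
  | .imp A B => !evalB v A || evalB v B

theorem IPC.evalB_eq_true {A : Fm} (h : IPC A) (v : ℕ → Bool) : evalB v A = true := by
  induction h with
  | mp _ _ ih₁ ih₂ => simp_all [evalB]
  | _ => simp only [evalB]; grind

theorem evalB_bigAndL {v : ℕ → Bool} {l : List Fm} :
    evalB v (bigAndL l) = true ↔ ∀ A ∈ l, evalB v A = true := by
  induction l with
  | nil => simp [bigAndL, evalB, Fm.top]
  | cons X l ih => simp [bigAndL, evalB, ← ih]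

theorem evalB_bigAndL_atoms (as : List ℕ) :
    evalB (fun q => decide (q ∈ as)) (bigAndL (as.map Fm.atom)) = true := by
  simp [evalB_bigAndL, evalB]

theorem ipc_bigAndL_atoms_imp_iff {as : List ℕ} {p : ℕ} :
    IPC ((bigAndL (as.map Fm.atom)).imp (.atom p)) ↔ p ∈ as := by
  refine ⟨fun h => ?_, fun hp => ?_⟩
  · have := h.evalB_eq_true (fun q => decide (q ∈ as))
    rw [evalB, evalB_bigAndL_atoms] at this
    simpa [evalB] using this
  · exact (Der.bigAndL_iff.1 Der.head _ (List.mem_map_of_mem hp)).imp_intro.toIPC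

def atomImp (e : ℕ × Fm) : Fm := (Fm.atom e.1).imp e.2

def component (as : List ℕ) (imps : List (ℕ × Fm)) : Fm :=
  (bigAndL (as.map Fm.atom)).and (bigAndL (imps.map atomImp))

def Slash (D : Fm) : Fm → Prop
  | .bot => IPC (D.imp .bot)
  | .atom n => IPC (D.imp (.atom n))
  | .and A B => Slash D A ∧ Slash D B
  | .or A B => Slash D A ∨ Slash D B
  | .imp A B => IPC (D.imp (A.imp B)) ∧ (Slash D A → Slash D B)

theorem Slash.ipc {D X : Fm} (h : Slash D X) : IPC (D.imp X) := by
  induction X with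
  | bot | atom _ => exact h
  | and A B ihA ihB =>
    exact IPC.mp_imp (IPC.mp_imp (IPC.weaken D (IPC.and_intro A B)) (ihA h.1)) (ihB h.2)
  | or A B ihA ihB =>
    rcases h with h | h
    · exact IPC.mp_imp (IPC.weaken D (IPC.or_inl A B)) (ihA h)
    · exact IPC.mp_imp (IPC.weaken D (IPC.or_inr A B)) (ihB h)
  | imp A B => exact h.1

theorem slash_of_ipc_imp_bot {D : Fm} (hD : IPC (D.imp .bot)) (X : Fm) : Slash D X := by
  have hexf (X : Fm) : IPC (D.imp X) := IPC.mp_imp (IPC.weaken D (IPC.exfalso X)) hD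
  induction X with
  | bot => exact hD
  | atom n => exact hexf _
  | and A B ihA ihB => exact ⟨ihA, ihB⟩
  | or A B ihA ihB => exact .inl ihA
  | imp A B ihA ihB => exact ⟨hexf _, fun _ => ihB⟩

theorem IPC.slash {D X : Fm} (h : IPC X) : Slash D X := by
  induction h with
  | imp_k A B =>
    exact ⟨weaken D (imp_k A B), fun sA => ⟨mp_imp (weaken D (imp_k A B)) sA.ipc, fun _ => sA⟩⟩
  | imp_s A B C =>
    refine ⟨weaken D (imp_s A B C), fun s₁ => ⟨mp_imp (weaken D (imp_s A B C)) s₁.1, fun s₂ => ?_⟩⟩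
    exact ⟨mp_imp (mp_imp (weaken D (imp_s A B C)) s₁.1) s₂.1, fun sA => (s₁.2 sA).2 (s₂.2 sA)⟩
  | and_intro A B =>
    exact ⟨weaken D (and_intro A B),
      fun sA => ⟨mp_imp (weaken D (and_intro A B)) sA.ipc, fun sB => ⟨sA, sB⟩⟩⟩
  | and_left A B => exact ⟨weaken D (and_left A B), And.left⟩
  | and_right A B => exact ⟨weaken D (and_right A B), And.right⟩
  | or_inl A B => exact ⟨weaken D (or_inl A B), Or.inl⟩
  | or_inr A B => exact ⟨weaken D (or_inr A B), Or.inr⟩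
  | or_elim A B C =>
    refine ⟨weaken D (or_elim A B C),
      fun s₁ => ⟨mp_imp (weaken D (or_elim A B C)) s₁.1, fun s₂ => ?_⟩⟩
    exact ⟨mp_imp (mp_imp (weaken D (or_elim A B C)) s₁.1) s₂.1, fun s => s.elim s₁.2 s₂.2⟩
  | exfalso A => exact ⟨weaken D (exfalso A), fun s => slash_of_ipc_imp_bot s A⟩
  | mp _ _ ih₁ ih₂ => exact ih₁.2 ih₂

theorem IPCPrime.of_slash_self {D : Fm} (h : Slash D D) : IPCPrime D :=
  fun _ _ hBC => ((IPC.slash hBC).2 h).imp Slash.ipc Slash.ipc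

theorem Slash.bigAndL {D : Fm} {l : List Fm} (h : ∀ X ∈ l, Slash D X) :
    Slash D (bigAndL l) := by
  induction l with
  | nil => exact ⟨IPC.weaken D (IPC.imp_self .bot), id⟩
  | cons X l ih =>
    exact ⟨h X List.mem_cons_self, ih fun Y hY => h Y (List.mem_cons_of_mem _ hY)⟩

theorem slash_component_self {as : List ℕ} {imps : List (ℕ × Fm)}
    (h : ∀ e ∈ imps, e.1 ∉ as) : Slash (component as imps) (component as imps) := by
  have hval : evalB (fun q => decide (q ∈ as)) (component as imps) = true := by
    simp only [component, evalB, evalB_bigAndL_atoms, Bool.true_and, evalB_bigAndL,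
      List.forall_mem_map, atomImp]
    exact fun e he => by simp [h e he]
  refine ⟨Slash.bigAndL fun X hX => ?_, Slash.bigAndL fun X hX => ?_⟩
  · obtain ⟨a, ha, rfl⟩ := List.mem_map.1 hX
    exact (Der.bigAndL_iff.1 Der.head.and_left _ hX).imp_intro.toIPC
  · obtain ⟨e, he, rfl⟩ := List.mem_map.1 hX
    refine ⟨(Der.bigAndL_iff.1 Der.head.and_right _ hX).imp_intro.toIPC, fun hp => ?_⟩
    have := (hp : IPC _).evalB_eq_true (fun q => decide (q ∈ as))
    simp [evalB, hval, h e he] at this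

theorem IsComponentOver.ipcPrime {D : Fm} (h : IsComponentOver IPC D) : IPCPrime D := by
  obtain ⟨as, imps, rfl, hcond⟩ := h
  exact .of_slash_self
    (slash_component_self fun e he hp => hcond e he (ipc_bigAndL_atoms_imp_iff.2 hp))

theorem NNIL.bigAndL {l : List Fm} (h : ∀ X ∈ l, NNIL X) : NNIL (bigAndL l) := by
  induction l with
  | nil => exact NNIL.imp NI.bot NNIL.bot
  | cons X l ih =>
    exact NNIL.and (h X List.mem_cons_self) (ih fun Y hY => h Y (List.mem_cons_of_mem _ hY))

theorem NNIL.bigOrNE {B : Fm} {l : List Fm} (h : ∀ C ∈ B :: l, NNIL C) :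
    NNIL (bigOrNE B l) := by
  induction l generalizing B with
  | nil => exact h B List.mem_cons_self
  | cons C l ih =>
    exact NNIL.or (h B List.mem_cons_self) (ih fun X hX => h X (List.mem_cons_of_mem _ hX))

theorem primeDecomposable_component {as : List ℕ} {imps : List (ℕ × Fm)}
    (h : ∀ e ∈ imps, e.1 ∉ as ∧ NNIL e.2) : PrimeDecomposable (component as imps) := by
  refine ⟨component as imps, [], ?_, IPC.iff_intro Der.head Der.head⟩
  simp only [List.mem_singleton, forall_eq]
  refine ⟨NNIL.and (NNIL.bigAndL ?_) (NNIL.bigAndL ?_), IsComponentOver.ipcPrime ?_⟩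
  · simp only [List.forall_mem_map]; exact fun a _ => NNIL.atom a
  · simp only [List.forall_mem_map]; exact fun e he => NNIL.imp (NI.atom _) (h e he).2
  · exact ⟨as, imps, rfl, fun e he hp => (h e he).1 (ipc_bigAndL_atoms_imp_iff.1 hp)⟩

/-- Antecedents weigh multiplicatively, so that currying `(C₁ ∧ C₂) → B` and splitting
`(C₁ ∨ C₂) → B` (which duplicates `B`) both lower the weight. -/
def antWeight : Fm → ℕ
  | .and A B => 2 * antWeight A * antWeight B
  | .or A B => antWeight A + antWeight B + 1
  | _ => 1

def weight : Fm → ℕ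
  | .and A B | .or A B => weight A + weight B + 1
  | .imp A B => antWeight A * (weight B + 1)
  | _ => 1

theorem one_le_antWeight (A : Fm) : 1 ≤ antWeight A := by
  induction A <;> simp only [antWeight] <;> nlinarith

theorem one_le_weight (A : Fm) : 1 ≤ weight A := by
  cases A with
  | imp A B => exact Nat.mul_pos (one_le_antWeight A) (Nat.succ_pos _)
  | _ => simp only [weight]; omega

theorem weight_curry_lt (C₁ C₂ B : Fm) :
    weight (C₁.imp (C₂.imp B)) < weight ((C₁.and C₂).imp B) := by
  have hx : 2 ≤ antWeight C₂ * (weight B + 1) :=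
    Nat.mul_le_mul (one_le_antWeight C₂) (Nat.succ_le_succ (one_le_weight B))
  simp only [weight, antWeight]
  calc antWeight C₁ * (antWeight C₂ * (weight B + 1) + 1)
      < antWeight C₁ * (2 * (antWeight C₂ * (weight B + 1))) :=
        Nat.mul_lt_mul_of_pos_left (by omega) (one_le_antWeight C₁)
    _ = 2 * antWeight C₁ * antWeight C₂ * (weight B + 1) := by ring

theorem weight_split_lt (C₁ C₂ B : Fm) :
    weight (C₁.imp B) + weight (C₂.imp B) < weight ((C₁.or C₂).imp B) := by
  simp only [weight, antWeight]
  nlinarith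

/-- A frozen implication `p → E` weighs `weight E`, less than the same formula while pending. -/
def stateWeight (imps : List (ℕ × Fm)) (todo : List Fm) : ℕ :=
  (imps.map fun e => weight e.2).sum + (todo.map weight).sum

theorem stateWeight_cons (imps : List (ℕ × Fm)) (T : Fm) (todo : List Fm) :
    stateWeight imps (T :: todo) = weight T + stateWeight imps todo := by
  simp only [stateWeight, List.map_cons, List.sum_cons]; omega

theorem stateWeight_cons_imps (e : ℕ × Fm) (imps : List (ℕ × Fm)) (todo : List Fm) :
    stateWeight (e :: imps) todo = weight e.2 + stateWeight imps todo := by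
  simp only [stateWeight, List.map_cons, List.sum_cons]; omega

/-- The state of the decomposition: the formulas `todo` still to be conjoined to
`component as imps`. -/
def stateCtx (as : List ℕ) (imps : List (ℕ × Fm)) (todo : List Fm) : List Fm :=
  todo ++ (as.map Fm.atom ++ imps.map atomImp)

section Steps

variable {A B C₁ C₂ : Fm} {Γ : List Fm}

theorem ipc_iff_bigAndL_drop (h : Der Γ A) : IPC ((bigAndL (A :: Γ)).iff (bigAndL Γ)) :=
  ipc_iff_bigAndL_cons (Δ := []) (by simp) h

theorem ipc_iff_bigAndL_bot_cons : IPC ((bigAndL (.bot :: Γ)).iff .bot) :=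
  IPC.iff_intro Der.head.and_left Der.head.exfalso

theorem ipc_iff_bigAndL_and_cons :
    IPC ((bigAndL (A.and B :: Γ)).iff (bigAndL (A :: B :: Γ))) :=
  ipc_iff_bigAndL_cons (Δ := [A, B]) (by simpa using ⟨Der.head.and_left, Der.head.and_right⟩)
    (Der.and_intro Der.head (Der.hyp (by simp)))

theorem ipc_and_or_distrib (A B C : Fm) :
    IPC (((A.or B).and C).iff ((A.and C).or (B.and C))) := by
  have hC (X : Fm) : Der [X, (A.or B).and C] C :=
    (Der.hyp (A := (A.or B).and C) (by simp)).and_right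
  refine IPC.iff_intro (Der.or_elim Der.head.and_left ?_ ?_) (Der.or_elim Der.head ?_ ?_)
  · exact Der.or_inl (Der.and_intro Der.head (hC _))
  · exact Der.or_inr (Der.and_intro Der.head (hC _))
  · exact Der.and_intro (Der.or_inl Der.head.and_left) Der.head.and_right
  · exact Der.and_intro (Der.or_inr Der.head.and_left) Der.head.and_right

theorem ipc_iff_bigAndL_imp_cons (h : Der Γ A) :
    IPC ((bigAndL (A.imp B :: Γ)).iff (bigAndL (B :: Γ))) :=
  ipc_iff_bigAndL_cons (Δ := [B])
    (by simpa using Der.mp Der.head (h.weaken (List.subset_cons_self _ _)))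
    (Der.mp (Der.ax (IPC.imp_k B A)) Der.head)

theorem ipc_iff_bigAndL_and_imp_cons :
    IPC ((bigAndL ((C₁.and C₂).imp B :: Γ)).iff (bigAndL (C₁.imp (C₂.imp B) :: Γ))) :=
  ipc_iff_bigAndL_cons (Δ := [C₁.imp (C₂.imp B)])
    (by simpa using (Der.mp (Der.hyp (A := (C₁.and C₂).imp B) (by simp))
      (Der.and_intro (Der.hyp (by simp)) Der.head)).imp_intro.imp_intro)
    (Der.mp (Der.mp (Der.hyp (A := C₁.imp (C₂.imp B)) (by simp)) Der.head.and_left)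
      Der.head.and_right).imp_intro

theorem ipc_iff_bigAndL_or_imp_cons :
    IPC ((bigAndL ((C₁.or C₂).imp B :: Γ)).iff (bigAndL (C₁.imp B :: C₂.imp B :: Γ))) := by
  have hB (C : Fm) : Der (C :: (C₁.or C₂).imp B :: Γ) ((C₁.or C₂).imp B) := Der.hyp (by simp)
  refine ipc_iff_bigAndL_cons (Δ := [C₁.imp B, C₂.imp B]) ?_ ?_
  · simpa using ⟨(Der.mp (hB C₁) (Der.or_inl Der.head)).imp_intro,
      (Der.mp (hB C₂) (Der.or_inr Der.head)).imp_intro⟩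
  · exact (Der.or_elim Der.head (Der.mp (Der.hyp (A := C₁.imp B) (by simp)) Der.head)
      (Der.mp (Der.hyp (A := C₂.imp B) (by simp)) Der.head)).imp_intro

end Steps

section StateCtx

variable {as : List ℕ} {imps : List (ℕ × Fm)} {todo rest : List Fm}

theorem mem_stateCtx {X : Fm} : X ∈ stateCtx as imps todo ↔
    X ∈ todo ∨ (∃ a ∈ as, Fm.atom a = X) ∨ ∃ e ∈ imps, atomImp e = X := by
  simp [stateCtx]

theorem mem_stateCtx_of_mem_todo {X : Fm} (h : X ∈ todo) : X ∈ stateCtx as imps todo :=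
  List.mem_append_left _ h

theorem atom_mem_stateCtx {a : ℕ} (h : a ∈ as) : Fm.atom a ∈ stateCtx as imps todo :=
  mem_stateCtx.2 (.inr (.inl ⟨a, h, rfl⟩))

theorem atomImp_mem_stateCtx {e : ℕ × Fm} (h : e ∈ imps) : atomImp e ∈ stateCtx as imps todo :=
  mem_stateCtx.2 (.inr (.inr ⟨e, h, rfl⟩))

theorem ipc_iff_bigAndL_stateCtx_nil :
    IPC ((bigAndL (stateCtx as imps [])).iff (component as imps)) := by
  refine IPC.iff_intro (Der.and_intro ?_ ?_) (Der.bigAndL_iff.2 fun X hX => ?_)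
  · exact Der.bigAndL_iff.2 fun X hX => Der.bigAndL_iff.1 Der.head X (by simp [stateCtx, hX])
  · exact Der.bigAndL_iff.2 fun X hX => Der.bigAndL_iff.1 Der.head X (by simp [stateCtx, hX])
  · rw [stateCtx, List.nil_append] at hX
    rcases List.mem_append.1 hX with hX | hX
    · exact Der.bigAndL_iff.1 Der.head.and_left X hX
    · exact Der.bigAndL_iff.1 Der.head.and_right X hX

theorem ipc_iff_stateCtx_freeze {p : ℕ} {B : Fm} :
    IPC ((bigAndL ((Fm.atom p).imp B :: stateCtx as imps rest)).iff
      (bigAndL (stateCtx as ((p, B) :: imps) rest))) := by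
  refine ipc_iff_bigAndL (fun X hX => Der.hyp ?_) (fun X hX => Der.hyp ?_) <;>
    simp only [List.mem_cons, mem_stateCtx] at hX ⊢ <;> grind [atomImp]

theorem ipc_iff_stateCtx_thaw {n : ℕ} :
    IPC ((bigAndL (.atom n :: stateCtx as imps rest)).iff
      (bigAndL (stateCtx (n :: as) (imps.filter fun e => ¬ e.1 = n)
        ((imps.filter fun e => e.1 = n).map Prod.snd ++ rest)))) := by
  refine ipc_iff_bigAndL (fun X hX => ?_) (fun X hX => ?_)
  · simp only [mem_stateCtx, List.mem_append, List.mem_map, List.mem_filter, List.mem_cons,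
      decide_eq_true_eq] at hX
    rcases hX with (⟨e, ⟨he, hen⟩, rfl⟩ | hX) | ⟨a, rfl | ha, rfl⟩ | ⟨e, ⟨he, -⟩, rfl⟩
    · exact Der.mp (Der.hyp (A := atomImp e) (List.mem_cons_of_mem _ (atomImp_mem_stateCtx he)))
        (hen ▸ Der.head)
    · exact Der.hyp (List.mem_cons_of_mem _ (mem_stateCtx_of_mem_todo hX))
    · exact Der.head
    · exact Der.hyp (List.mem_cons_of_mem _ (atom_mem_stateCtx ha))
    · exact Der.hyp (List.mem_cons_of_mem _ (atomImp_mem_stateCtx he))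
  · simp only [List.mem_cons, mem_stateCtx] at hX
    rcases hX with rfl | hX | ⟨a, ha, rfl⟩ | ⟨e, he, rfl⟩
    · exact Der.hyp (atom_mem_stateCtx List.mem_cons_self)
    · exact Der.hyp (mem_stateCtx_of_mem_todo (List.mem_append_right _ hX))
    · exact Der.hyp (atom_mem_stateCtx (List.mem_cons_of_mem _ ha))
    · by_cases hen : e.1 = n
      · refine Der.mp (Der.ax (IPC.imp_k _ _)) (Der.hyp (mem_stateCtx_of_mem_todo ?_))
        exact List.mem_append_left _ (List.mem_map_of_mem (List.mem_filter.2 ⟨he, by simpa⟩))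
      · exact Der.hyp (atomImp_mem_stateCtx (List.mem_filter.2 ⟨he, by simpa⟩))

end StateCtx

def DecomposableBelow (w : ℕ) : Prop :=
  ∀ (as : List ℕ) (imps : List (ℕ × Fm)) (todo : List Fm), stateWeight imps todo < w →
    (∀ e ∈ imps, e.1 ∉ as ∧ NNIL e.2) → (∀ T ∈ todo, NNIL T) →
    PrimeDecomposable (bigAndL (stateCtx as imps todo))

section Decomposition

variable {as : List ℕ} {imps : List (ℕ × Fm)} {rest : List Fm}

theorem primeDecomposable_atom_cons {n : ℕ}
    (ih : DecomposableBelow (stateWeight imps (.atom n :: rest)))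
    (himps : ∀ e ∈ imps, e.1 ∉ as ∧ NNIL e.2) (hrest : ∀ T ∈ rest, NNIL T) :
    PrimeDecomposable (bigAndL (stateCtx as imps (.atom n :: rest))) := by
  by_cases hn : n ∈ as
  · exact (ih as imps rest (by simp [stateWeight_cons, weight]) himps hrest).of_iff
      (ipc_iff_bigAndL_drop (Der.hyp (atom_mem_stateCtx hn)))
  refine (ih (n :: as) _ _ ?_ ?_ ?_).of_iff ipc_iff_stateCtx_thaw
  · have := List.sum_map_filter_add_sum_map_filter_not (fun e : ℕ × Fm => e.1 = n)
      (fun e => weight e.2) imps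
    simp only [stateWeight, weight, List.map_cons, List.sum_cons, List.map_append,
      List.sum_append, List.map_map, Function.comp_def] at this ⊢
    omega
  · simp only [List.mem_filter, decide_eq_true_eq, List.mem_cons]
    exact fun e ⟨he, hen⟩ => ⟨by rintro (h | h); exacts [hen h, (himps e he).1 h], (himps e he).2⟩
  · simp only [List.mem_append, List.mem_map, List.mem_filter]
    rintro T (⟨e, ⟨he, -⟩, rfl⟩ | hT)
    exacts [(himps e he).2, hrest T hT]

theorem primeDecomposable_imp_cons {C B : Fm} (hC : NI C) (hB : NNIL B)
    (ih : DecomposableBelow (stateWeight imps (C.imp B :: rest)))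
    (himps : ∀ e ∈ imps, e.1 ∉ as ∧ NNIL e.2) (hrest : ∀ T ∈ rest, NNIL T) :
    PrimeDecomposable (bigAndL (stateCtx as imps (C.imp B :: rest))) := by
  cases hC with
  | bot =>
    have := one_le_weight (Fm.bot.imp B)
    exact (ih as imps rest (by rw [stateWeight_cons]; omega) himps hrest).of_iff
      (ipc_iff_bigAndL_drop (Der.ax (IPC.exfalso B)))
  | atom p =>
    by_cases hp : p ∈ as
    · exact (ih as imps (B :: rest) (by simp [stateWeight_cons, weight, antWeight]) himps
        (List.forall_mem_cons.2 ⟨hB, hrest⟩)).of_iff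
        (ipc_iff_bigAndL_imp_cons (Der.hyp (atom_mem_stateCtx hp)))
    · refine (ih as ((p, B) :: imps) rest ?_ ?_ hrest).of_iff ipc_iff_stateCtx_freeze
      · simp only [stateWeight_cons, stateWeight_cons_imps, weight, antWeight]; omega
      · exact List.forall_mem_cons.2 ⟨⟨hp, hB⟩, himps⟩
  | @and C₁ C₂ hC₁ hC₂ =>
    refine (ih as imps (C₁.imp (C₂.imp B) :: rest) ?_ himps ?_).of_iff
      ipc_iff_bigAndL_and_imp_cons
    · simp [stateWeight_cons, weight_curry_lt]
    · exact List.forall_mem_cons.2 ⟨NNIL.imp hC₁ (NNIL.imp hC₂ hB), hrest⟩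
  | @or C₁ C₂ hC₁ hC₂ =>
    refine (ih as imps (C₁.imp B :: C₂.imp B :: rest) ?_ himps ?_).of_iff
      ipc_iff_bigAndL_or_imp_cons
    · have := weight_split_lt C₁ C₂ B
      simp only [stateWeight_cons]; omega
    · simpa using ⟨NNIL.imp hC₁ hB, NNIL.imp hC₂ hB, hrest⟩

theorem primeDecomposable_of_below {todo : List Fm}
    (ih : DecomposableBelow (stateWeight imps todo))
    (himps : ∀ e ∈ imps, e.1 ∉ as ∧ NNIL e.2) (htodo : ∀ T ∈ todo, NNIL T) :
    PrimeDecomposable (bigAndL (stateCtx as imps todo)) := by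
  rcases todo with _ | ⟨T, rest⟩
  · exact (primeDecomposable_component himps).of_iff ipc_iff_bigAndL_stateCtx_nil
  obtain ⟨hT, hrest⟩ := List.forall_mem_cons.1 htodo
  cases hT with
  | bot => exact primeDecomposable_bot.of_iff ipc_iff_bigAndL_bot_cons
  | atom n => exact primeDecomposable_atom_cons ih himps hrest
  | and hA hB =>
    exact (ih as imps (_ :: _ :: rest) (by simp only [stateWeight_cons, weight]; omega) himps
      (by simpa using ⟨hA, hB, hrest⟩)).of_iff ipc_iff_bigAndL_and_cons
  | or hA hB =>
    have hA' := ih as imps (_ :: rest) (by simp only [stateWeight_cons, weight]; omega) himps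
      (List.forall_mem_cons.2 ⟨hA, hrest⟩)
    have hB' := ih as imps (_ :: rest) (by simp only [stateWeight_cons, weight]; omega) himps
      (List.forall_mem_cons.2 ⟨hB, hrest⟩)
    exact (hA'.or hB').of_iff (ipc_and_or_distrib _ _ _)
  | imp hC hB => exact primeDecomposable_imp_cons hC hB ih himps hrest

end Decomposition

theorem primeDecomposable_stateCtx (as : List ℕ) (imps : List (ℕ × Fm)) (todo : List Fm)
    (himps : ∀ e ∈ imps, e.1 ∉ as ∧ NNIL e.2) (htodo : ∀ T ∈ todo, NNIL T) :
    PrimeDecomposable (bigAndL (stateCtx as imps todo)) := by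
  suffices ∀ w, DecomposableBelow w from this _ as imps todo (Nat.lt_succ_self _) himps htodo
  intro w
  induction w with
  | zero => exact fun _ _ _ h => absurd h (Nat.not_lt_zero _)
  | succ w ih =>
    exact fun as imps todo hw => primeDecomposable_of_below fun as' imps' todo' h =>
      ih as' imps' todo' (by omega)

theorem stmt_16 :
    (∀ A : Fm, NNIL A → ∃ (B : Fm) (l : List Fm),
      (∀ C ∈ B :: l, NNIL C ∧ IPCPrime C) ∧ IPC (A.iff (bigOrNE B l))) ∧
    (∀ (B : Fm) (l : List Fm), (∀ C ∈ B :: l, NNIL C) →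
      NNIL (bigOrNE B l)) := by
  refine ⟨fun A hA => ?_, fun _ _ => NNIL.bigOrNE⟩
  refine (primeDecomposable_stateCtx [] [] [A] (by simp) (by simpa using hA)).of_iff ?_
  exact IPC.iff_intro (Der.and_intro Der.head (Der.ax (IPC.imp_self _))) Der.head.and_left
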